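/- Let A be a commutative ring with a ring endomorphism φ and an ideal I ⊆ A, and let D⁺ be an A-module with a φ-semilinear endomorphism. Let P ∈ A_0[T] be a polynomial over a subring A_0, and let ∇ be an A_0-linear operator on D⁺, where I = (t) with ∇(t) = t, commuting appropriately so that ∇ acts on each graded piece D(j) = I^j D⁺/I^{j+1} D⁺ as ∇_0 + j for a fixed operator ∇_0 on D = D⁺/I D⁺. If P(∇_0 + j) is bijective on D(j) for all j ≥ 1 and D⁺ is I-adically separated and complete, then the reduction map (D⁺)^{P(∇)=0} → D^{P(∇_0)=0} is bijective. -/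
import Mathlib


/-- Let `A` be a commutative ring, `t ∈ A`, and `D⁺` a `t`-adically
separated and complete `A`-module.  Let `L : D⁺ → D⁺` be an additive operator
(playing the role of `P(∇)`) preserving each `t^j D⁺` and inducing a bijective map
on each graded piece `t^j D⁺ / t^{j+1} D⁺` for `j ≥ 1`.  Then the reduction map
`(D⁺)^{L=0} → (D⁺/tD⁺)^{L=0}` is bijective: an element of `ker L` lying in `tD⁺`
is zero, and any element of `D⁺` killed by `L` modulo `tD⁺` lifts to a genuine
element of `ker L`. -/
theorem stmt18 (A : Type*) [CommRing A] (t : A)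
    (Dp : Type*) [AddCommGroup Dp] [Module A Dp]
    (L : Dp →+ Dp)
    (hLT : ∀ (j : ℕ), ∀ y ∈ (Ideal.span {t} ^ j • ⊤ : Submodule A Dp),
      L y ∈ (Ideal.span {t} ^ j • ⊤ : Submodule A Dp))
    (hinj : ∀ (j : ℕ), 1 ≤ j → ∀ y ∈ (Ideal.span {t} ^ j • ⊤ : Submodule A Dp),
      L y ∈ (Ideal.span {t} ^ (j + 1) • ⊤ : Submodule A Dp) →
      y ∈ (Ideal.span {t} ^ (j + 1) • ⊤ : Submodule A Dp))
    (hsurjmod : ∀ (j : ℕ), 1 ≤ j → ∀ y ∈ (Ideal.span {t} ^ j • ⊤ : Submodule A Dp),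
      ∃ z ∈ (Ideal.span {t} ^ j • ⊤ : Submodule A Dp),
        L z - y ∈ (Ideal.span {t} ^ (j + 1) • ⊤ : Submodule A Dp))
    (hsep : (⨅ j : ℕ, (Ideal.span {t} ^ j • ⊤ : Submodule A Dp)) = ⊥)
    (hcomplete : ∀ s : ℕ → Dp,
      (∀ j : ℕ, s (j + 1) - s j ∈ (Ideal.span {t} ^ j • ⊤ : Submodule A Dp)) →
      ∃ z : Dp, ∀ j : ℕ, z - s j ∈ (Ideal.span {t} ^ j • ⊤ : Submodule A Dp)) :
    (∀ y : Dp, L y = 0 → y ∈ (Ideal.span {t} ^ 1 • ⊤ : Submodule A Dp) → y = 0) ∧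
    (∀ z₀ : Dp, L z₀ ∈ (Ideal.span {t} ^ 1 • ⊤ : Submodule A Dp) →
      ∃ z : Dp, L z = 0 ∧ z - z₀ ∈ (Ideal.span {t} ^ 1 • ⊤ : Submodule A Dp)) := by
  have hmono : ∀ j : ℕ, (Ideal.span {t} ^ (j+1) • ⊤ : Submodule A Dp) ≤
      (Ideal.span {t} ^ j • ⊤ : Submodule A Dp) := fun j =>
    Submodule.smul_mono_left (Ideal.pow_le_pow_right (Nat.le_succ j))
  constructor
  · intro y hy hy1
    have key : ∀ j, y ∈ (Ideal.span {t} ^ (j+1) • ⊤ : Submodule A Dp) := by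
      intro j
      induction j with
      | zero => simpa using hy1
      | succ n ih =>
        exact hinj (n+1) (Nat.le_add_left 1 n) y ih (by rw [hy]; exact zero_mem _)
    have hmem : y ∈ (⨅ j : ℕ, (Ideal.span {t} ^ j • ⊤ : Submodule A Dp)) := by
      rw [Submodule.mem_iInf]
      intro j
      cases j with
      | zero => simp
      | succ n => exact key n
    rw [hsep] at hmem
    simpa using hmem
  · intro z₀ hz₀
    have step : ∀ (j : ℕ) (z : Dp), L z ∈ (Ideal.span {t} ^ (j+1) • ⊤ : Submodule A Dp) →
        ∃ w ∈ (Ideal.span {t} ^ (j+1) • ⊤ : Submodule A Dp),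
          L (z - w) ∈ (Ideal.span {t} ^ (j+1+1) • ⊤ : Submodule A Dp) := by
      intro j z hz
      obtain ⟨w, hw, hw2⟩ := hsurjmod (j+1) (Nat.le_add_left 1 j) (L z) hz
      refine ⟨w, hw, ?_⟩
      rw [map_sub]
      simpa [neg_sub] using Submodule.neg_mem _ hw2
    let g : ∀ j : ℕ, {z : Dp // L z ∈ (Ideal.span {t} ^ (j+1) • ⊤ : Submodule A Dp)} :=
      fun j => Nat.rec ⟨z₀, hz₀⟩
        (fun n p => ⟨p.1 - (step n p.1 p.2).choose, (step n p.1 p.2).choose_spec.2⟩) j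
    set s : ℕ → Dp := fun j => (g j).1 with hs
    have hdiff : ∀ j, s (j+1) - s j ∈ (Ideal.span {t} ^ (j+1) • ⊤ : Submodule A Dp) := by
      intro j
      have : s (j+1) = s j - (step j (g j).1 (g j).2).choose := rfl
      rw [this]
      simpa using Submodule.neg_mem _ (step j (g j).1 (g j).2).choose_spec.1
    obtain ⟨z, hz⟩ := hcomplete s (fun j => hmono j (hdiff j))
    refine ⟨z, ?_, ?_⟩
    · have hLmem : ∀ j, L z ∈ (Ideal.span {t} ^ j • ⊤ : Submodule A Dp) := by
        intro j
        have h1 : L (z - s j) ∈ (Ideal.span {t} ^ j • ⊤ : Submodule A Dp) :=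
          hLT j _ (hz j)
        have h2 : L (s j) ∈ (Ideal.span {t} ^ j • ⊤ : Submodule A Dp) :=
          hmono j (g j).2
        have : L z = L (z - s j) + L (s j) := by rw [map_sub]; abel
        rw [this]
        exact Submodule.add_mem _ h1 h2
      have hmem : L z ∈ (⨅ j : ℕ, (Ideal.span {t} ^ j • ⊤ : Submodule A Dp)) :=
        Submodule.mem_iInf _ |>.mpr hLmem
      rw [hsep] at hmem
      simpa using hmem
    · have h0 : s 0 = z₀ := rfl
      have : z - z₀ = (z - s 1) + (s 1 - s 0) := by rw [h0]; abel
      rw [this]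
      exact Submodule.add_mem _ (hz 1) (hdiff 0)
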